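/- For every integer k ≥ 1, all x, y ∈ ℝⁿ and every t > 0, the functions A_k satisfy the recursive system of partial differential equations ∂A_k/∂t (x,y,t) = D Δ_x A_k(x,y,t) − λ A_k(x,y,t) + λ B A_{k−1}(x,y,t), where Δ_x is the Laplacian in the variable x; moreover A_0 satisfies ∂A_0/∂t = D Δ_x A_0 − λ A_0 for t > 0. -/

import Mathlib

/-!
The density factors as `A_k(x, y, t) = p_k(t) G(x - y, t)`, where `p_k` is the Poisson weight
`(λBt)^k / k! · e^{-λt}` and `G` is the heat kernel of `∂_t - DΔ`. The heat kernel solves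
`∂_t G = D ΔG`, while `p_k' = -λ p_k + λB p_{k-1}` (and `p_0' = -λ p_0`); the product rule in
`t`, together with the fact that `p_k(t)` is a constant for `Δ_x`, gives the system.
-/

open Real MeasureTheory Set

/-- The generation-`k` expectation density of the branching diffusion:
`A_k(x,y,t) = ((λBt)^k / k!) e^{-λt} (4πDt)^{-n/2} exp(-|x-y|²/(4Dt))`. -/
noncomputable def branchDensity (n : ℕ) (lam D B : ℝ) (k : ℕ)
    (x y : EuclideanSpace ℝ (Fin n)) (t : ℝ) : ℝ :=
  ((lam * B * t) ^ k / (Nat.factorial k : ℝ)) * Real.exp (-lam * t) *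
    (4 * π * D * t) ^ (-(n : ℝ) / 2) * Real.exp (-‖x - y‖ ^ 2 / (4 * D * t))

/-- The Laplacian of `f : ℝⁿ → ℝ` at `x`, as the sum of the second partial
derivatives along the coordinate directions. -/
noncomputable def laplacian (n : ℕ) (f : EuclideanSpace ℝ (Fin n) → ℝ)
    (x : EuclideanSpace ℝ (Fin n)) : ℝ :=
  ∑ i : Fin n,
    deriv (deriv (fun s : ℝ => f (x + s • EuclideanSpace.single i (1:ℝ)))) 0

section Laplacian

variable {n : ℕ}

theorem laplacian_const_mul (c : ℝ) (f : EuclideanSpace ℝ (Fin n) → ℝ)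
    (x : EuclideanSpace ℝ (Fin n)) :
    laplacian n (fun x' => c * f x') x = c * laplacian n f x := by
  simp only [laplacian, deriv_const_mul_field', Finset.mul_sum]

theorem laplacian_comp_sub_const (f : EuclideanSpace ℝ (Fin n) → ℝ)
    (x y : EuclideanSpace ℝ (Fin n)) :
    laplacian n (fun x' => f (x' - y)) x = laplacian n f (x - y) := by
  simp only [laplacian, sub_add_eq_add_sub]

theorem EuclideanSpace.norm_add_smul_single_sq (z : EuclideanSpace ℝ (Fin n)) (i : Fin n)
    (s : ℝ) :
    ‖z + s • EuclideanSpace.single i (1 : ℝ)‖ ^ 2 = ‖z‖ ^ 2 + 2 * z i * s + s ^ 2 := by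
  rw [norm_add_sq_real, real_inner_smul_right, EuclideanSpace.inner_single_right, norm_smul,
    PiLp.norm_single]
  simp only [conj_trivial, one_mul, norm_one, mul_one, Real.norm_eq_abs, sq_abs]
  ring

end Laplacian

theorem deriv_deriv_exp_neg_quadratic_div (q a c : ℝ) (hc : c ≠ 0) :
    deriv (deriv fun s : ℝ => Real.exp (-(q + 2 * a * s + s ^ 2) / c)) 0
      = Real.exp (-q / c) * (4 * a ^ 2 / c ^ 2 - 2 / c) := by
  have hφ (s : ℝ) : HasDerivAt (fun s : ℝ => -(q + 2 * a * s + s ^ 2) / c)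
      (-(2 * a + 2 * s) / c) s :=
    ((((hasDerivAt_id' s).const_mul (2 * a)).const_add q).add
      (hasDerivAt_pow 2 s)).neg.div_const c |>.congr_deriv (by norm_num)
  have hφ' : HasDerivAt (fun s : ℝ => -(2 * a + 2 * s) / c) (-2 / c) 0 :=
    (((hasDerivAt_id' (0 : ℝ)).const_mul 2).const_add (2 * a)).neg.div_const c
      |>.congr_deriv (by norm_num)
  rw [funext fun s => (hφ s).exp.deriv]
  refine ((hφ 0).exp.mul hφ').deriv.trans ?_
  simp only [mul_zero, add_zero, zero_pow two_ne_zero]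
  field_simp
  ring

noncomputable def heatKernel (n : ℕ) (D : ℝ) (z : EuclideanSpace ℝ (Fin n)) (t : ℝ) : ℝ :=
  (4 * π * D * t) ^ (-(n : ℝ) / 2) * Real.exp (-‖z‖ ^ 2 / (4 * D * t))

section HeatKernel

variable {n : ℕ} {D t : ℝ}

theorem laplacian_heatKernel (hD : D ≠ 0) (ht : t ≠ 0) (z : EuclideanSpace ℝ (Fin n)) :
    laplacian n (fun z' => heatKernel n D z' t) z
      = (4 * ‖z‖ ^ 2 / (4 * D * t) ^ 2 - 2 * n / (4 * D * t)) * heatKernel n D z t := by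
  have hc : 4 * D * t ≠ 0 := by simp [hD, ht]
  have hcoord (i : Fin n) :
      deriv (deriv fun s : ℝ => Real.exp (-‖z + s • EuclideanSpace.single i (1 : ℝ)‖ ^ 2
        / (4 * D * t))) 0
        = Real.exp (-‖z‖ ^ 2 / (4 * D * t))
          * (4 * z i ^ 2 / (4 * D * t) ^ 2 - 2 / (4 * D * t)) := by
    simp only [EuclideanSpace.norm_add_smul_single_sq, neg_div]
    simpa only [neg_div] using deriv_deriv_exp_neg_quadratic_div (‖z‖ ^ 2) (z i) _ hc
  simp only [heatKernel, laplacian_const_mul]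
  simp only [laplacian, hcoord, ← Finset.mul_sum, Finset.sum_sub_distrib, ← Finset.sum_div,
    EuclideanSpace.real_norm_sq_eq z, Finset.sum_const, Finset.card_univ, Fintype.card_fin,
    nsmul_eq_mul]
  ring

theorem hasDerivAt_heatKernel_time (hD : D ≠ 0) (ht : t ≠ 0) (z : EuclideanSpace ℝ (Fin n)) :
    HasDerivAt (heatKernel n D z)
      ((‖z‖ ^ 2 / (4 * D * t ^ 2) - n / (2 * t)) * heatKernel n D z t) t := by
  have hc : 4 * D * t ≠ 0 := by simp [hD, ht]
  have hb : 4 * π * D * t ≠ 0 := by simp [hD, ht, pi_ne_zero]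
  have hpow := ((hasDerivAt_id' t).const_mul (4 * π * D)).rpow_const (p := -(n : ℝ) / 2)
    (Or.inl (by simpa [mul_assoc] using hb))
  have hexp := ((hasDerivAt_const t (-‖z‖ ^ 2)).div
    ((hasDerivAt_id' t).const_mul (4 * D)) (by simpa [mul_assoc] using hc)).exp
  refine (hpow.mul hexp).congr_deriv ?_
  simp only [heatKernel, Pi.div_apply, Real.rpow_sub_one hb]
  field_simp
  ring

theorem hasDerivAt_heatKernel (hD : D ≠ 0) (ht : t ≠ 0) (z : EuclideanSpace ℝ (Fin n)) :
    HasDerivAt (heatKernel n D z) (D * laplacian n (fun z' => heatKernel n D z' t) z) t := by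
  refine (hasDerivAt_heatKernel_time hD ht z).congr_deriv ?_
  rw [laplacian_heatKernel hD ht]
  field_simp
  ring

end HeatKernel

theorem hasDerivAt_pow_div_factorial_succ (a t : ℝ) (k : ℕ) :
    HasDerivAt (fun τ => (a * τ) ^ (k + 1) / (k + 1).factorial)
      (a * ((a * t) ^ k / k.factorial)) t := by
  refine (((hasDerivAt_id' t).const_mul a).pow (k + 1)).div_const _ |>.congr_deriv ?_
  push_cast [Nat.factorial_succ]
  field_simp

noncomputable def poissonWeight (lam B : ℝ) (k : ℕ) (t : ℝ) : ℝ :=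
  (lam * B * t) ^ k / k.factorial * Real.exp (-lam * t)

section PoissonWeight

variable (lam B t : ℝ)

theorem hasDerivAt_poissonWeight_zero :
    HasDerivAt (poissonWeight lam B 0) (-lam * poissonWeight lam B 0 t) t := by
  have hexp : poissonWeight lam B 0 = fun τ => Real.exp (-lam * τ) := by
    funext τ
    simp [poissonWeight]
  rw [hexp]
  exact ((hasDerivAt_id' t).const_mul (-lam)).exp.congr_deriv (by ring)

theorem hasDerivAt_poissonWeight_succ (k : ℕ) :
    HasDerivAt (poissonWeight lam B (k + 1))
      (lam * B * poissonWeight lam B k t - lam * poissonWeight lam B (k + 1) t) t := by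
  refine (hasDerivAt_pow_div_factorial_succ (lam * B) t k).mul
    ((hasDerivAt_id' t).const_mul (-lam)).exp |>.congr_deriv ?_
  simp only [poissonWeight]
  ring

end PoissonWeight

theorem deriv_mul_heatKernel {n : ℕ} {D t : ℝ} (hD : D ≠ 0) (ht : t ≠ 0) {f : ℝ → ℝ} {f' : ℝ}
    (hf : HasDerivAt f f' t) (x y : EuclideanSpace ℝ (Fin n)) :
    deriv (fun τ => f τ * heatKernel n D (x - y) τ) t
      = D * laplacian n (fun x' => f t * heatKernel n D (x' - y) t) x
        + f' * heatKernel n D (x - y) t := by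
  refine (hf.mul (hasDerivAt_heatKernel hD ht (x - y))).deriv.trans ?_
  rw [laplacian_const_mul, laplacian_comp_sub_const (fun z => heatKernel n D z t)]
  ring

theorem branchDensity_eq_poissonWeight_mul_heatKernel (n : ℕ) (lam D B : ℝ) (k : ℕ)
    (x y : EuclideanSpace ℝ (Fin n)) (t : ℝ) :
    branchDensity n lam D B k x y t = poissonWeight lam B k t * heatKernel n D (x - y) t := by
  simp only [branchDensity, poissonWeight, heatKernel]
  ring

theorem branchDensity_pde_general
    (n : ℕ) (lam D B : ℝ) (hD : 0 < D)
    (k : ℕ) (hk : 1 ≤ k) (x y : EuclideanSpace ℝ (Fin n)) (t : ℝ) (ht : 0 < t) :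
    (deriv (fun τ => branchDensity n lam D B k x y τ) t =
      D * laplacian n (fun x' => branchDensity n lam D B k x' y t) x
        - lam * branchDensity n lam D B k x y t
        + lam * B * branchDensity n lam D B (k - 1) x y t) ∧
    (deriv (fun τ => branchDensity n lam D B 0 x y τ) t =
      D * laplacian n (fun x' => branchDensity n lam D B 0 x' y t) x
        - lam * branchDensity n lam D B 0 x y t) := by
  obtain ⟨j, rfl⟩ : ∃ j, k = j + 1 := ⟨k - 1, by omega⟩
  simp only [branchDensity_eq_poissonWeight_mul_heatKernel, Nat.add_sub_cancel]
  constructor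
  · rw [deriv_mul_heatKernel hD.ne' ht.ne' (hasDerivAt_poissonWeight_succ lam B t j)]
    ring
  · rw [deriv_mul_heatKernel hD.ne' ht.ne' (hasDerivAt_poissonWeight_zero lam B t)]
    ring

/-- The densities `A_k` satisfy the recursive system of PDEs
`∂A_k/∂t = D Δ_x A_k − λ A_k + λ B A_{k−1}` for `k ≥ 1`, and
`∂A_0/∂t = D Δ_x A_0 − λ A_0`. -/
theorem branchDensity_pde
    (n : ℕ) (hn : 1 ≤ n) (lam D B : ℝ) (hlam : 0 < lam) (hD : 0 < D) (hB : 0 < B)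
    (k : ℕ) (hk : 1 ≤ k) (x y : EuclideanSpace ℝ (Fin n)) (t : ℝ) (ht : 0 < t) :
    (deriv (fun τ => branchDensity n lam D B k x y τ) t =
      D * laplacian n (fun x' => branchDensity n lam D B k x' y t) x
        - lam * branchDensity n lam D B k x y t
        + lam * B * branchDensity n lam D B (k - 1) x y t) ∧
    (deriv (fun τ => branchDensity n lam D B 0 x y τ) t =
      D * laplacian n (fun x' => branchDensity n lam D B 0 x' y t) x
        - lam * branchDensity n lam D B 0 x y t) :=
  branchDensity_pde_general n lam D B hD k hk x y t ht
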